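/- arXiv:2006.04626 — 7 statements merged into one kernel-verified Lean document; each statement's English description precedes it below -/
import Mathlib

section
/- Let S ⊆ ℕ_0^d be a generalized numerical semigroup with genus g and type t. Then for every gap h ∈ H(S) one has 2g + 1 − t ≥ |h+1|_× (equivalently, 2g + 1 ≥ t + ∏_{i=1}^d (h^(i)+1)). -/
open scoped BigOperators

/-- A generalized numerical semigroup: a submonoid of `ℕ^d` with finite complement. -/
def IsGNS {d : ℕ} (S : Set (Fin d → ℕ)) : Prop :=
  (0 : Fin d → ℕ) ∈ S ∧ (∀ x y : Fin d → ℕ, x ∈ S → y ∈ S → x + y ∈ S) ∧ Sᶜ.Finite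

/-- The genus: number of gaps. -/
noncomputable def genus {d : ℕ} (S : Set (Fin d → ℕ)) : ℕ := Sᶜ.ncard

/-- Pseudo-Frobenius elements. -/
def PF {d : ℕ} (S : Set (Fin d → ℕ)) : Set (Fin d → ℕ) :=
  {h | h ∉ S ∧ ∀ s ∈ S, s ≠ 0 → h + s ∈ S}

/-- The type: number of pseudo-Frobenius elements. -/
noncomputable def typ {d : ℕ} (S : Set (Fin d → ℕ)) : ℕ := (PF S).ncard

/-- Maximal elements of a set with respect to a relation. -/
def Maximals {α : Type*} (le : α → α → Prop) (X : Set α) : Set α :=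
  {x ∈ X | ∀ y ∈ X, le x y → x = y}

/-- `f` is the unique maximal element of the set of gaps w.r.t. the componentwise order. -/
def IsFrobenius {d : ℕ} (S : Set (Fin d → ℕ)) (f : Fin d → ℕ) : Prop :=
  Maximals (· ≤ ·) Sᶜ = {f}

/-- Almost symmetric: `2 g(S) + 1 - t(S) = ∏ (h i + 1)` for some gap `h`. -/
def AlmostSymmetric {d : ℕ} (S : Set (Fin d → ℕ)) : Prop :=
  ∃ h ∉ S, 2 * genus S + 1 = typ S + ∏ i, (h i + 1)

/-- Special gaps. -/
def SG {d : ℕ} (S : Set (Fin d → ℕ)) : Set (Fin d → ℕ) :=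
  {h ∈ PF S | h + h ∈ S}

/-- The partial order `≤_S` : `y ≤_S x` iff `x - y ∈ S`. -/
def leS {d : ℕ} (S : Set (Fin d → ℕ)) (x y : Fin d → ℕ) : Prop :=
  ∃ s ∈ S, x + s = y

/-- The Apéry set of `S` with respect to `n`. -/
def Ap {d : ℕ} (S : Set (Fin d → ℕ)) (n : Fin d → ℕ) : Set (Fin d → ℕ) :=
  {s ∈ S | ¬ ∃ u ∈ S, u + n = s}

/-- The reduced Apéry set of `S` with respect to `n`. -/
def Cred {d : ℕ} (S : Set (Fin d → ℕ)) (n : Fin d → ℕ) : Set (Fin d → ℕ) :=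
  {s ∈ Ap S n | ∃ h, h ∉ S ∧ s ≤ h + n}

/-- A monomial order on `ℕ^d` given by its strict-order relation. -/
def IsMonomialOrder (d : ℕ) (lt : (Fin d → ℕ) → (Fin d → ℕ) → Prop) : Prop :=
  (∀ a, ¬ lt a a) ∧ (∀ a b c, lt a b → lt b c → lt a c) ∧
  (∀ a b, a ≠ b → lt a b ∨ lt b a) ∧
  (∀ u a b, lt a b → lt (a + u) (b + u)) ∧
  (∀ a, a ≠ (0 : Fin d → ℕ) → lt 0 a)

/-- Minimal generator of a GNS. -/
def IsMinGen {d : ℕ} (S : Set (Fin d → ℕ)) (x : Fin d → ℕ) : Prop :=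
  x ∈ S ∧ x ≠ 0 ∧ ∀ y ∈ S, ∀ z ∈ S, y ≠ 0 → z ≠ 0 → y + z ≠ x

/-- Irreducible GNS: not an intersection of two GNSs properly containing it. -/
def GNSIrreducible {d : ℕ} (S : Set (Fin d → ℕ)) : Prop :=
  ¬ ∃ S₁ S₂ : Set (Fin d → ℕ), IsGNS S₁ ∧ IsGNS S₂ ∧ S ⊂ S₁ ∧ S ⊂ S₂ ∧ S = S₁ ∩ S₂

/-- Pseudo-symmetric: `PF S = {f, f/2}`. -/
def PseudoSymmetric {d : ℕ} (S : Set (Fin d → ℕ)) : Prop :=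
  ∃ f q : Fin d → ℕ, f ≠ q ∧ q + q = f ∧ PF S = {f, q}

/-- For a GNS `S` with genus `g` and type `t`, every gap `h` satisfies
`2g + 1 ≥ t + ∏ (h i + 1)`. -/
theorem statement0 (d : ℕ) (hd : 0 < d) (S : Set (Fin d → ℕ)) (hS : IsGNS S)
    (h : Fin d → ℕ) (hh : h ∉ S) :
    typ S + ∏ i, (h i + 1) ≤ 2 * genus S + 1 := by
  classical
  obtain ⟨h0, hadd, hfin⟩ := hS
  set B : Finset (Fin d → ℕ) := Finset.Icc 0 h with hB
  have hBcard : B.card = ∏ i, (h i + 1) := by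
    simp [hB, Pi.card_Icc, Nat.card_Icc]
  set BS := B.filter (· ∈ S) with hBS
  set BH := B.filter (· ∉ S) with hBH
  have hsplit : BS.card + BH.card = B.card :=
    Finset.card_filter_add_card_filter_not _
  have hBHle : BH.card ≤ genus S := by
    have hsub : (↑BH : Set (Fin d → ℕ)) ⊆ Sᶜ := by
      intro x hx
      simp only [hBH, Finset.coe_filter, Set.mem_setOf_eq] at hx
      exact hx.2
    calc BH.card = (↑BH : Set (Fin d → ℕ)).ncard := (Set.ncard_coe_finset _).symm
      _ ≤ Sᶜ.ncard := Set.ncard_le_ncard hsub hfin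
  have hmem_le : ∀ x ∈ BS, x ≤ h := by
    intro x hx
    simp only [hBS, Finset.mem_filter, hB, Finset.mem_Icc] at hx
    exact hx.1.2
  have hmemS : ∀ x ∈ BS, x ∈ S := by
    intro x hx
    simp only [hBS, Finset.mem_filter] at hx
    exact hx.2
  have hcancel : ∀ x ∈ BS, h - x + x = h := by
    intro x hx
    funext i
    exact Nat.sub_add_cancel (hmem_le x hx i)
  set I := BS.image (fun x => h - x) with hI
  have hIcard : I.card = BS.card := by
    apply Finset.card_image_of_injOn
    intro x hx y hy hxy
    have hxy' : h - x = h - y := hxy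
    have e1 := hcancel x (Finset.mem_coe.mp hx)
    have e2 := hcancel y (Finset.mem_coe.mp hy)
    rw [hxy'] at e1
    exact add_left_cancel (e1.trans e2.symm)
  have h0BS : (0 : Fin d → ℕ) ∈ BS := by
    simp only [hBS, Finset.mem_filter, hB, Finset.mem_Icc]
    exact ⟨⟨le_refl _, fun i => Nat.zero_le _⟩, h0⟩
  have hhImem : h ∈ I := by
    simp only [hI, Finset.mem_image]
    exact ⟨0, h0BS, by funext i; simp⟩
  have hIgap : ∀ y ∈ I, y ∉ S := by
    intro y hy hyS
    simp only [hI, Finset.mem_image] at hy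
    obtain ⟨x, hx, rfl⟩ := hy
    exact hh (hcancel x hx ▸ hadd _ _ hyS (hmemS x hx))
  set I' := I.erase h with hI'
  have hI'card : I'.card = I.card - 1 := Finset.card_erase_of_mem hhImem
  have hPFfin : (PF S).Finite := hfin.subset (fun x hx => hx.1)
  have hdisj : Disjoint (↑I' : Set (Fin d → ℕ)) (PF S) := by
    rw [Set.disjoint_left]
    intro y hy hyPF
    simp only [hI', Finset.coe_erase, Set.mem_diff, Finset.mem_coe, Set.mem_singleton_iff] at hy
    obtain ⟨hyI, hyne⟩ := hy
    simp only [hI, Finset.mem_image] at hyI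
    obtain ⟨x, hx, rfl⟩ := hyI
    have hxne : x ≠ 0 := by
      intro h0x
      apply hyne
      subst h0x
      funext i; simp
    have := hyPF.2 x (hmemS x hx) hxne
    rw [hcancel x hx] at this
    exact hh this
  have hunion : (↑I' : Set (Fin d → ℕ)) ∪ PF S ⊆ Sᶜ := by
    intro y hy
    rcases hy with hy | hy
    · exact hIgap y (Finset.mem_of_mem_erase hy)
    · exact hy.1
  have hkey : I'.card + typ S ≤ genus S := by
    have h1 : ((↑I' : Set (Fin d → ℕ)) ∪ PF S).ncard =
        (↑I' : Set (Fin d → ℕ)).ncard + (PF S).ncard :=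
      Set.ncard_union_eq hdisj (I'.finite_toSet) hPFfin
    have h2 : ((↑I' : Set (Fin d → ℕ)) ∪ PF S).ncard ≤ Sᶜ.ncard :=
      Set.ncard_le_ncard hunion hfin
    rw [h1, Set.ncard_coe_finset] at h2
    exact h2
  have hBS1 : 1 ≤ BS.card := Finset.card_pos.mpr ⟨0, h0BS⟩
  have heq : typ S + ∏ i, (h i + 1) = typ S + BS.card + BH.card := by
    rw [← hBcard, ← hsplit]; ring
  rw [heq]
  clear_value BS BH I I'
  omega
end

section
/- Every almost symmetric generalized numerical semigroup S ⊆ ℕ_0^d is a Frobenius GNS, i.e. H(S) has a unique maximal element f with respect to the componentwise order; moreover, if S is almost symmetric with genus g, type t and Frobenius element f, then 2g + 1 − t = |f+1|_×. In particular, the gap h realizing the defining equality of almost-symmetry is unique and equals f. -/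
open scoped BigOperators

lemma key_lemma {d : ℕ} (S : Set (Fin d → ℕ)) (hS : IsGNS S) (h : Fin d → ℕ)
    (hh : h ∉ S) (heq : 2 * genus S + 1 = typ S + ∏ i, (h i + 1)) :
    ∀ x, x ∉ S → x ≤ h := by
  have hHfin : Sᶜ.Finite := hS.2.2
  have hIicFin : (Set.Iic h).Finite := Set.finite_Iic h
  set A : Set (Fin d → ℕ) := S ∩ Set.Iic h with hA
  set C : Set (Fin d → ℕ) := Sᶜ ∩ Set.Iic h with hC
  have hAfin : A.Finite := hIicFin.subset (Set.inter_subset_right)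
  have hCfin : C.Finite := hIicFin.subset (Set.inter_subset_right)
  -- |Iic h| = ∏ (h i + 1)
  have hcardIic : (Set.Iic h).ncard = ∏ i, (h i + 1) := by
    rw [← Finset.coe_Iic, Set.ncard_coe_finset, Pi.card_Iic]
    simp [Nat.card_Iic]
  -- partition of the box
  have hsplit : A.ncard + C.ncard = ∏ i, (h i + 1) := by
    rw [← hcardIic, ← Set.ncard_union_eq ?_ hAfin hCfin]
    · congr 1
      rw [hA, hC, ← Set.union_inter_distrib_right, Set.union_compl_self, Set.univ_inter]
    · exact Set.disjoint_left.2 fun x hx hx' => hx'.1 hx.1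
  -- the image of A under s ↦ h - s
  set B : Set (Fin d → ℕ) := (fun s => h - s) '' A with hB
  have hinj : Set.InjOn (fun s => h - s) A := by
    intro s hs s' hs' hss
    have h1 : h - (h - s) = s := tsub_tsub_cancel_of_le hs.2
    have h2 : h - (h - s') = s' := tsub_tsub_cancel_of_le hs'.2
    rw [← h1, ← h2, show h - s = h - s' from hss]
  have hBcard : B.ncard = A.ncard := Set.ncard_image_of_injOn hinj
  have hBfin : B.Finite := hAfin.image _
  have hBsub : B ⊆ Sᶜ := by
    rintro _ ⟨s, hs, rfl⟩ hmem
    exact hh (by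
      have := hS.2.1 _ _ hmem hs.1
      rwa [tsub_add_cancel_of_le hs.2] at this)
  -- B meets PF only at h
  have hBPF : ∀ z ∈ B, z ∈ PF S → z = h := by
    rintro _ ⟨s, hs, rfl⟩ hz
    by_cases hs0 : s = 0
    · simp [hs0]
    · exfalso
      have := hz.2 s hs.1 hs0
      rw [tsub_add_cancel_of_le hs.2] at this
      exact hh this
  set D : Set (Fin d → ℕ) := PF S \ {h} with hD
  have hDsub : D ⊆ Sᶜ := fun z hz => hz.1.1
  have hDfin : D.Finite := hHfin.subset hDsub
  have hdisj : Disjoint B D := by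
    refine Set.disjoint_left.2 fun z hzB hzD => hzD.2 (hBPF z hzB hzD.1)
  have hBD : B.ncard + D.ncard ≤ genus S := by
    rw [← Set.ncard_union_eq hdisj hBfin hDfin]
    exact Set.ncard_le_ncard (Set.union_subset hBsub hDsub) hHfin
  have htD : typ S ≤ D.ncard + 1 := by
    have hsub : PF S ⊆ insert h D := by
      intro z hz
      by_cases hzh : z = h
      · exact hzh ▸ Set.mem_insert _ _
      · exact Set.mem_insert_of_mem _ ⟨hz, hzh⟩
    calc typ S ≤ (insert h D).ncard :=
          Set.ncard_le_ncard hsub (hDfin.insert h)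
      _ ≤ D.ncard + 1 := Set.ncard_insert_le h D
  have hCg : C.ncard ≤ genus S := Set.ncard_le_ncard Set.inter_subset_left hHfin
  -- conclude C = Sᶜ
  have hCeq : C.ncard = genus S := by omega
  have hCSc : C = Sᶜ := Set.eq_of_subset_of_ncard_le Set.inter_subset_left hCeq.ge hHfin
  intro x hx
  have : x ∈ C := hCSc ▸ hx
  exact this.2

/-- Every almost symmetric GNS is a Frobenius GNS; moreover
`2g + 1 - t = ∏ (f i + 1)` and `f` is the unique gap realizing the defining equality. -/
theorem statement1 (d : ℕ) (hd : 0 < d) (S : Set (Fin d → ℕ)) (hS : IsGNS S)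
    (hAS : AlmostSymmetric S) :
    ∃ f : Fin d → ℕ, IsFrobenius S f ∧
      2 * genus S + 1 = typ S + ∏ i, (f i + 1) ∧
      ∀ h : Fin d → ℕ, h ∉ S → 2 * genus S + 1 = typ S + ∏ i, (h i + 1) → h = f := by
  obtain ⟨f, hf, heq⟩ := hAS
  have hkey := key_lemma S hS f hf heq
  refine ⟨f, ?_, heq, ?_⟩
  · ext x
    simp only [IsFrobenius, Maximals, Set.mem_setOf_eq, Set.mem_singleton_iff]
    constructor
    · rintro ⟨hx, hmax⟩
      exact hmax f hf (hkey x hx)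
    · rintro rfl
      exact ⟨hf, fun y hy hfy => le_antisymm hfy (hkey y hy)⟩
  · intro h hh heq'
    exact le_antisymm (hkey h hh) (key_lemma S hS h hh heq' f hf)
end

section
/- Let (S, f) be a Frobenius GNS in ℕ_0^d. Then S is almost symmetric if and only if for every gap h ∈ H(S) ∖ (PF(S) ∖ {f}) one has f − h ∈ S. -/
open scoped BigOperators

/-! Reflection `x ↦ f - x` is an involution of the box `Iic f`, which contains every gap. It
matches the elements of `S` in the box with the gaps `h` such that `f - h ∈ S`, so
`2 g(S) = |f + 1|_× + |L|`, where `L = reflectedGaps S f` is the set of gaps `h` with `f - h`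
also a gap. Since `PF(S) ∖ {f} ⊆ L` and `t(S) = |PF(S) ∖ {f}| + 1`, always
`2 g(S) + 1 - t(S) ≥ |f + 1|_×`, while `|h + 1|_× ≤ |f + 1|_×` for every gap `h`; hence `S` is
almost symmetric exactly when `L = PF(S) ∖ {f}`, i.e. when `f - h ∈ S` for every other gap `h`. -/

theorem ncard_Iic_eq_prod {d : ℕ} (f : Fin d → ℕ) : (Set.Iic f).ncard = ∏ i, (f i + 1) := by
  rw [← Finset.coe_Iic, Set.ncard_coe_finset, Pi.card_Iic]
  simp

theorem exists_mem_add_eq_iff_tsub_mem {d : ℕ} {S : Set (Fin d → ℕ)} {f h : Fin d → ℕ}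
    (hle : h ≤ f) : (∃ s ∈ S, h + s = f) ↔ f - h ∈ S :=
  ⟨fun ⟨s, hs, hsum⟩ => by rwa [← hsum, add_tsub_cancel_left],
    fun hs => ⟨f - h, hs, add_tsub_cancel_of_le hle⟩⟩

def reflectedGaps {d : ℕ} (S : Set (Fin d → ℕ)) (f : Fin d → ℕ) : Set (Fin d → ℕ) :=
  {h | h ∉ S ∧ f - h ∉ S}

namespace IsFrobenius

variable {d : ℕ} {S : Set (Fin d → ℕ)} {f : Fin d → ℕ}

theorem notMem (hf : IsFrobenius S f) : f ∉ S :=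
  (hf.symm ▸ Set.mem_singleton f : f ∈ Maximals (· ≤ ·) Sᶜ).1

theorem le_of_notMem (hfin : Sᶜ.Finite) (hf : IsFrobenius S f) {h : Fin d → ℕ} (hh : h ∉ S) :
    h ≤ f := by
  obtain ⟨m, hhm, hm⟩ := hfin.exists_le_maximal hh
  have hmax : m ∈ Maximals (· ≤ ·) Sᶜ :=
    ⟨hm.prop, fun y hy hmy => le_antisymm hmy (hm.2 hy hmy)⟩
  rw [hf, Set.mem_singleton_iff] at hmax
  exact hmax ▸ hhm

theorem mem_PF (hfin : Sᶜ.Finite) (hf : IsFrobenius S f) : f ∈ PF S := by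
  refine ⟨hf.notMem, fun s _ hs0 => ?_⟩
  by_contra hfs
  exact hs0 (add_eq_left.mp (le_antisymm (hf.le_of_notMem hfin hfs) le_self_add))

theorem typ_eq (hfin : Sᶜ.Finite) (hf : IsFrobenius S f) : typ S = (PF S \ {f}).ncard + 1 :=
  (Set.ncard_sdiff_singleton_add_one (hf.mem_PF hfin) (hfin.subset fun _ h => h.1)).symm

theorem PF_diff_subset_reflectedGaps (hfin : Sᶜ.Finite) (hf : IsFrobenius S f) :
    PF S \ {f} ⊆ reflectedGaps S f := by
  rintro h ⟨⟨hhS, hPF⟩, hhf⟩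
  refine ⟨hhS, fun hfh => hf.notMem ?_⟩
  have hle := hf.le_of_notMem hfin hhS
  rw [← add_tsub_cancel_of_le hle]
  exact hPF _ hfh fun h0 => hhf (le_antisymm hle (tsub_eq_zero_iff_le.mp h0))

theorem ncard_inter_Iic_add_genus (hfin : Sᶜ.Finite) (hf : IsFrobenius S f) :
    (S ∩ Set.Iic f).ncard + genus S = ∏ i, (f i + 1) := by
  rw [Set.inter_comm, ← Set.sdiff_compl, genus, ← ncard_Iic_eq_prod]
  exact Set.ncard_sdiff_add_ncard_of_subset (fun _ hh => hf.le_of_notMem hfin hh)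
    (Set.finite_Iic f)

theorem ncard_compl_inter_setOf_tsub_mem (hS : IsGNS S) (hf : IsFrobenius S f) :
    (Sᶜ ∩ {h | f - h ∈ S}).ncard = (S ∩ Set.Iic f).ncard := by
  have hinj : Set.InjOn (f - ·) (Set.Iic f) := fun x (hx : x ≤ f) y (hy : y ≤ f) hxy => by
    rw [← tsub_tsub_cancel_of_le hx, ← tsub_tsub_cancel_of_le hy]
    exact congrArg (f - ·) hxy
  have himage : Sᶜ ∩ {h | f - h ∈ S} = (f - ·) '' (S ∩ Set.Iic f) := by
    ext h
    constructor
    · rintro ⟨hhS, hfh⟩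
      exact ⟨f - h, ⟨hfh, Set.mem_Iic.mpr tsub_le_self⟩,
        tsub_tsub_cancel_of_le (hf.le_of_notMem hS.2.2 hhS)⟩
    · rintro ⟨x, ⟨hxS, hxf : x ≤ f⟩, rfl⟩
      refine ⟨fun hfx => hf.notMem ?_, by rwa [Set.mem_ofPred_eq, tsub_tsub_cancel_of_le hxf]⟩
      rw [← add_tsub_cancel_of_le hxf]
      exact hS.2.1 _ _ hxS hfx
  rw [himage, (hinj.mono Set.inter_subset_right).ncard_image]

theorem two_mul_genus_eq (hS : IsGNS S) (hf : IsFrobenius S f) :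
    2 * genus S = ∏ i, (f i + 1) + (reflectedGaps S f).ncard := by
  have hsplit : (Sᶜ ∩ {h | f - h ∈ S}).ncard + (reflectedGaps S f).ncard = genus S :=
    Set.ncard_inter_add_ncard_sdiff_eq_ncard _ _ hS.2.2
  have := hf.ncard_inter_Iic_add_genus hS.2.2
  have := hf.ncard_compl_inter_setOf_tsub_mem hS
  omega

theorem almostSymmetric_iff (hS : IsGNS S) (hf : IsFrobenius S f) :
    AlmostSymmetric S ↔ reflectedGaps S f ⊆ PF S \ {f} := by
  have hsub := hf.PF_diff_subset_reflectedGaps hS.2.2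
  have hfinL : (reflectedGaps S f).Finite := hS.2.2.subset fun _ h => h.1
  have hg := hf.two_mul_genus_eq hS
  have ht := hf.typ_eq hS.2.2
  constructor
  · rintro ⟨h, hhS, hh⟩
    have hprod : ∏ i, (h i + 1) ≤ ∏ i, (f i + 1) :=
      Finset.prod_le_prod' fun i _ => Nat.succ_le_succ (hf.le_of_notMem hS.2.2 hhS i)
    exact (Set.eq_of_subset_of_ncard_le hsub (by omega) hfinL).symm.subset
  · intro hL
    have := Set.ncard_le_ncard hL (hfinL.subset hsub)
    have := Set.ncard_le_ncard hsub hfinL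
    exact ⟨f, hf.notMem, by omega⟩

end IsFrobenius

theorem statement2_general (d : ℕ) (S : Set (Fin d → ℕ)) (hS : IsGNS S)
    (f : Fin d → ℕ) (hf : IsFrobenius S f) :
    AlmostSymmetric S ↔
      ∀ h : Fin d → ℕ, h ∉ S → h ∉ PF S \ {f} → ∃ s ∈ S, h + s = f := by
  rw [hf.almostSymmetric_iff hS]
  constructor
  · intro hL h hhS hPF
    rw [exists_mem_add_eq_iff_tsub_mem (hf.le_of_notMem hS.2.2 hhS)]
    by_contra hfh
    exact hPF (hL ⟨hhS, hfh⟩)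
  · rintro hR h ⟨hhS, hfh⟩
    by_contra hPF
    exact hfh ((exists_mem_add_eq_iff_tsub_mem (hf.le_of_notMem hS.2.2 hhS)).1 (hR h hhS hPF))

/-- A Frobenius GNS `(S, f)` is almost symmetric iff for every gap
`h ∈ H(S) ∖ (PF(S) ∖ {f})` one has `f - h ∈ S`. -/
theorem statement2 (d : ℕ) (hd : 0 < d) (S : Set (Fin d → ℕ)) (hS : IsGNS S)
    (f : Fin d → ℕ) (hf : IsFrobenius S f) :
    AlmostSymmetric S ↔
      ∀ h : Fin d → ℕ, h ∉ S → h ∉ PF S \ {f} → ∃ s ∈ S, h + s = f :=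
  statement2_general d S hS f hf
end

section
/- Let (S, f) be a Frobenius GNS in ℕ_0^d. Then S is almost symmetric if and only if PF(S) = L(S) ∪ {f}, where L(S) = {h ∈ H(S) : there exists h' ∈ H(S) with h + h' = f}. -/
open scoped BigOperators

/-!
Every gap lies below the Frobenius element `f`, and `x ↦ f - x` maps the gaps outside `L(S)`
bijectively onto the elements of `S` below `f`. Counting the box `Iic f` therefore gives
`2 g(S) = |L(S)| + |f + 1|_×`. On the other hand `PF(S) ⊆ L(S) ∪ {f}`, so `t(S) ≤ |L(S)| + 1`.
Since `|h + 1|_× ≤ |f + 1|_×` for every gap `h`, almost symmetry forces `t(S) = |L(S)| + 1`,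
i.e. `PF(S) = L(S) ∪ {f}`; conversely that equality makes `h = f` a witness of almost symmetry.
-/

open Set

section

variable {d : ℕ} {S : Set (Fin d → ℕ)} {f h : Fin d → ℕ}

/-- The set `L(S)` of the paper. -/
def complementaryGaps (S : Set (Fin d → ℕ)) (f : Fin d → ℕ) : Set (Fin d → ℕ) :=
  {h | h ∉ S ∧ ∃ h', h' ∉ S ∧ h + h' = f}

theorem IsFrobenius.notMem_s5 (hf : IsFrobenius S f) : f ∉ S := by
  have : f ∈ Maximals (· ≤ ·) Sᶜ := by rw [hf]; rfl
  exact this.1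

theorem IsFrobenius.le_of_notMem_s5 (hfin : Sᶜ.Finite) (hf : IsFrobenius S f) (hh : h ∉ S) :
    h ≤ f := by
  obtain ⟨m, hhm, hm⟩ := hfin.exists_le_maximal hh
  have : m ∈ Maximals (· ≤ ·) Sᶜ := ⟨hm.1, fun y hy hmy => le_antisymm hmy (hm.2 hy hmy)⟩
  rw [hf, mem_singleton_iff] at this
  exact this ▸ hhm

theorem mem_complementaryGaps_iff (hh : h ≤ f) :
    h ∈ complementaryGaps S f ↔ h ∉ S ∧ f - h ∉ S := by
  constructor
  · rintro ⟨hS, h', hh', rfl⟩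
    rw [add_tsub_cancel_left]
    exact ⟨hS, hh'⟩
  · rintro ⟨hS, hfh⟩
    exact ⟨hS, f - h, hfh, add_tsub_cancel_of_le hh⟩

theorem frobenius_notMem_complementaryGaps (h0 : 0 ∈ S) : f ∉ complementaryGaps S f := by
  rintro ⟨-, h', hh', hf⟩
  exact hh' (add_eq_left.mp hf ▸ h0)

theorem complementaryGaps_subset_compl : complementaryGaps S f ⊆ Sᶜ := fun _ hh => hh.1

theorem Set.Finite.complementaryGaps (hfin : Sᶜ.Finite) : (complementaryGaps S f).Finite :=
  hfin.subset complementaryGaps_subset_compl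

theorem PF_subset_insert_complementaryGaps (hfin : Sᶜ.Finite) (hf : IsFrobenius S f) :
    PF S ⊆ insert f (complementaryGaps S f) := by
  rintro h ⟨hh, hadd⟩
  have hhf := hf.le_of_notMem_s5 hfin hh
  by_cases hfh : f - h ∈ S
  · left
    by_cases h0 : f - h = 0
    · exact le_antisymm hhf (tsub_eq_zero_iff_le.mp h0)
    · exact absurd (add_tsub_cancel_of_le hhf ▸ hadd _ hfh h0) hf.notMem_s5
  · exact Or.inr ((mem_complementaryGaps_iff hhf).mpr ⟨hh, hfh⟩)

theorem ncard_Iic (f : Fin d → ℕ) : (Iic f).ncard = ∏ i, (f i + 1) := by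
  rw [← Finset.coe_Iic, ncard_coe_finset, Pi.card_Iic]
  simp only [Nat.card_Iic]

theorem ncard_Iic_inter_add_genus (hfin : Sᶜ.Finite) (hf : IsFrobenius S f) :
    (Iic f ∩ S).ncard + genus S = ∏ i, (f i + 1) := by
  have hgaps : Iic f ∩ Sᶜ = Sᶜ := inter_eq_right.mpr fun _ => hf.le_of_notMem_s5 hfin
  rw [← ncard_Iic, genus, ← ncard_union_eq (disjoint_compl_right.mono_left inter_subset_right)
    ((finite_Iic f).inter_of_left S) hfin, ← hgaps, inter_union_compl]

theorem image_tsub_compl_diff_complementaryGaps (hS : IsGNS S) (hf : IsFrobenius S f) :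
    (f - ·) '' (Sᶜ \ complementaryGaps S f) = Iic f ∩ S := by
  apply Subset.antisymm
  · rintro _ ⟨x, ⟨hx, hxL⟩, rfl⟩
    rw [mem_complementaryGaps_iff (hf.le_of_notMem_s5 hS.2.2 hx), not_and, not_not] at hxL
    exact ⟨mem_Iic.mpr tsub_le_self, hxL hx⟩
  · rintro y ⟨hyf : y ≤ f, hyS⟩
    have hfy : f - y ∉ S := fun hfy =>
      hf.notMem_s5 (add_tsub_cancel_of_le hyf ▸ hS.2.1 y (f - y) hyS hfy)
    refine ⟨f - y, ⟨hfy, ?_⟩, tsub_tsub_cancel_of_le hyf⟩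
    rw [mem_complementaryGaps_iff tsub_le_self, tsub_tsub_cancel_of_le hyf]
    exact fun h => h.2 hyS

theorem ncard_complementaryGaps_add_ncard_Iic_inter (hS : IsGNS S) (hf : IsFrobenius S f) :
    (complementaryGaps S f).ncard + (Iic f ∩ S).ncard = genus S := by
  have hinj : InjOn (f - ·) (Iic f) := LeftInvOn.injOn fun _ hx => tsub_tsub_cancel_of_le hx
  rw [← image_tsub_compl_diff_complementaryGaps hS hf,
    (hinj.mono fun _ hx => hf.le_of_notMem_s5 hS.2.2 hx.1).ncard_image, add_comm]
  exact ncard_sdiff_add_ncard_of_subset complementaryGaps_subset_compl hS.2.2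

theorem two_mul_genus (hS : IsGNS S) (hf : IsFrobenius S f) :
    2 * genus S = (complementaryGaps S f).ncard + ∏ i, (f i + 1) := by
  have := ncard_Iic_inter_add_genus hS.2.2 hf
  have := ncard_complementaryGaps_add_ncard_Iic_inter hS hf
  omega

theorem ncard_insert_complementaryGaps (hS : IsGNS S) :
    (insert f (complementaryGaps S f)).ncard = (complementaryGaps S f).ncard + 1 :=
  ncard_insert_of_notMem (frobenius_notMem_complementaryGaps hS.1) hS.2.2.complementaryGaps

theorem typ_le_ncard_complementaryGaps_add_one (hS : IsGNS S) (hf : IsFrobenius S f) :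
    typ S ≤ (complementaryGaps S f).ncard + 1 := by
  rw [← ncard_insert_complementaryGaps hS]
  exact ncard_le_ncard (PF_subset_insert_complementaryGaps hS.2.2 hf)
    (hS.2.2.complementaryGaps.insert f)

theorem PF_eq_insert_complementaryGaps_iff (hS : IsGNS S) (hf : IsFrobenius S f) :
    PF S = insert f (complementaryGaps S f) ↔ (complementaryGaps S f).ncard + 1 ≤ typ S := by
  rw [← ncard_insert_complementaryGaps hS]
  refine ⟨fun h => by rw [typ, h], fun h => ?_⟩
  exact eq_of_subset_of_ncard_le (PF_subset_insert_complementaryGaps hS.2.2 hf) h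
    (hS.2.2.complementaryGaps.insert f)

end

theorem statement5_general (d : ℕ) (S : Set (Fin d → ℕ)) (hS : IsGNS S)
    (f : Fin d → ℕ) (hf : IsFrobenius S f) :
    AlmostSymmetric S ↔
      PF S = {h : Fin d → ℕ | h ∉ S ∧ ∃ h', h' ∉ S ∧ h + h' = f} ∪ {f} := by
  change _ ↔ PF S = complementaryGaps S f ∪ {f}
  rw [union_singleton, PF_eq_insert_complementaryGaps_iff hS hf]
  have hgenus := two_mul_genus hS hf
  constructor
  · rintro ⟨h, hh, hsym⟩
    have : ∏ i, (h i + 1) ≤ ∏ i, (f i + 1) := by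
      gcongr with i
      exact hf.le_of_notMem_s5 hS.2.2 hh i
    omega
  · intro hL
    have := typ_le_ncard_complementaryGaps_add_one hS hf
    exact ⟨f, hf.notMem_s5, by omega⟩

/-- A Frobenius GNS `(S, f)` is almost symmetric iff `PF(S) = L(S) ∪ {f}`. -/
theorem statement5 (d : ℕ) (hd : 0 < d) (S : Set (Fin d → ℕ)) (hS : IsGNS S)
    (f : Fin d → ℕ) (hf : IsFrobenius S f) :
    AlmostSymmetric S ↔
      PF S = {h : Fin d → ℕ | h ∉ S ∧ ∃ h', h' ∉ S ∧ h + h' = f} ∪ {f} :=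
  statement5_general d S hS f hf
end

section
/- Let S ⊆ ℕ_0^d be a GNS with H(S) ≠ ∅ and let n ∈ S, n ≠ 0. Then the set of maximal elements of Ap(S,n) with respect to the componentwise order ≤ equals the set of maximal elements of C(S,n) with respect to ≤, and both equal {h + n : h is a maximal element of H(S) with respect to ≤}. -/
open scoped BigOperators

/-!
A maximal gap `h` satisfies `h + t ∈ S` for every `t ≠ 0`; this makes `h + n` a maximal element
of `Ap(S,n)`. Conversely, a maximal element `x` of `Ap(S,n)` must satisfy `n ≤ x`: otherwise
`x i < n i` for some `i`, and raising another coordinate of `x` past all gaps stays inside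
`Ap(S,n)`. Then `x - n` is a gap, it lies below a maximal gap `h`, and maximality forces
`x = h + n`. Every element of `C(S,n)` lies below some `h + n`, so `C(S,n)` has the same maximal
elements as `Ap(S,n)`.
-/

section Maximals

variable {α : Type*}

lemma maximals_eq_of_subset {le : α → α → Prop} {A B : Set α} (hBA : B ⊆ A)
    (hmax : Maximals le A ⊆ B) (hbound : ∀ x ∈ B, ∃ m ∈ Maximals le A, le x m) :
    Maximals le B = Maximals le A := by
  ext x
  constructor
  · rintro ⟨hxB, hx⟩
    obtain ⟨m, hm, hxm⟩ := hbound x hxB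
    rwa [hx m (hmax hm) hxm]
  · intro hx
    exact ⟨hmax hx, fun y hy => hx.2 y (hBA hy)⟩

lemma Set.Finite.exists_le_mem_maximals [PartialOrder α] {X : Set α} (hX : X.Finite) {a : α}
    (ha : a ∈ X) : ∃ m ∈ Maximals (· ≤ ·) X, a ≤ m := by
  obtain ⟨m, ham, hm⟩ := hX.exists_le_maximal ha
  exact ⟨m, maximal_iff.mp hm, ham⟩

end Maximals

section Apery

variable {d : ℕ} {S : Set (Fin d → ℕ)} {n h : Fin d → ℕ}

lemma add_mem_of_mem_maximals_compl (hh : h ∈ Maximals (· ≤ ·) Sᶜ) {t : Fin d → ℕ}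
    (ht : t ≠ 0) : h + t ∈ S := by
  by_contra hc
  exact ht (left_eq_add.mp (hh.2 _ hc le_self_add))

lemma mem_Ap_of_apply_lt {x : Fin d → ℕ} (hx : x ∈ S) {i : Fin d} (hi : x i < n i) :
    x ∈ Ap S n := by
  refine ⟨hx, ?_⟩
  rintro ⟨u, -, rfl⟩
  simp at hi

lemma exists_forall_mem_of_lt_apply (hfin : Sᶜ.Finite) (j : Fin d) :
    ∃ b, ∀ y : Fin d → ℕ, b < y j → y ∈ S := by
  obtain ⟨b, hb⟩ := (hfin.image (fun v => v j)).bddAbove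
  refine ⟨b, fun y hy => ?_⟩
  by_contra hyS
  exact absurd (hb ⟨y, hyS, rfl⟩) (not_le.mpr hy)

lemma add_mem_Ap_of_mem_maximals_compl (hn0 : n ≠ 0) (hh : h ∈ Maximals (· ≤ ·) Sᶜ) :
    h + n ∈ Ap S n := by
  refine ⟨add_mem_of_mem_maximals_compl hh hn0, ?_⟩
  rintro ⟨u, hu, hun⟩
  exact hh.1 (add_right_cancel hun ▸ hu)

lemma add_mem_Cred_of_mem_maximals_compl (hn0 : n ≠ 0) (hh : h ∈ Maximals (· ≤ ·) Sᶜ) :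
    h + n ∈ Cred S n :=
  ⟨add_mem_Ap_of_mem_maximals_compl hn0 hh, h, hh.1, le_rfl⟩

lemma add_mem_maximals_Ap (hn0 : n ≠ 0) (hh : h ∈ Maximals (· ≤ ·) Sᶜ) :
    h + n ∈ Maximals (· ≤ ·) (Ap S n) := by
  refine ⟨add_mem_Ap_of_mem_maximals_compl hn0 hh, ?_⟩
  rintro y hy hle
  obtain ⟨t, rfl⟩ := exists_add_of_le hle
  by_contra hne
  have ht : t ≠ 0 := fun ht => hne (by rw [ht, add_zero])
  exact hy.2 ⟨h + t, add_mem_of_mem_maximals_compl hh ht, add_right_comm h t n⟩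

lemma le_of_mem_maximals_Ap (hfin : Sᶜ.Finite) (hH : Sᶜ.Nonempty) (hn0 : n ≠ 0)
    {x : Fin d → ℕ} (hx : x ∈ Maximals (· ≤ ·) (Ap S n)) : n ≤ x := by
  by_contra hnx
  obtain ⟨i, hi⟩ : ∃ i, x i < n i := by simpa [Pi.le_def] using hnx
  obtain ⟨h, hh, -⟩ := hfin.exists_le_mem_maximals hH.some_mem
  -- `x` is not below `h + n`, as that would force `x = h + n ≥ n`
  obtain ⟨j, hj⟩ : ∃ j, h j + n j < x j := by
    by_contra! hxh
    have := hx.2 _ (add_mem_maximals_Ap hn0 hh).1 hxh ▸ hi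
    simp at this
  have hji : j ≠ i := by
    rintro rfl
    omega
  obtain ⟨b, hb⟩ := exists_forall_mem_of_lt_apply hfin j
  set y := x + Pi.single j (b + 1)
  have hyS : y ∈ S := hb y (by simp [y]; omega)
  have hyAp : y ∈ Ap S n := mem_Ap_of_apply_lt hyS (i := i) (by simpa [y, hji.symm] using hi)
  have hxy := hx.2 y hyAp le_self_add
  have := congrFun (left_eq_add.mp hxy) j
  simp at this

lemma exists_mem_maximals_compl_of_mem_maximals_Ap (hfin : Sᶜ.Finite) (hH : Sᶜ.Nonempty)
    (hn0 : n ≠ 0) {x : Fin d → ℕ} (hx : x ∈ Maximals (· ≤ ·) (Ap S n)) :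
    ∃ h ∈ Maximals (· ≤ ·) Sᶜ, h + n = x := by
  obtain ⟨u, rfl⟩ := exists_add_of_le (le_of_mem_maximals_Ap hfin hH hn0 hx)
  have hu : u ∉ S := fun hu => hx.1.2 ⟨u, hu, add_comm u n⟩
  obtain ⟨h, hh, hle⟩ := hfin.exists_le_mem_maximals hu
  have hxh : n + u ≤ h + n := by rw [add_comm h]; exact add_le_add_right hle n
  exact ⟨h, hh, (hx.2 _ (add_mem_maximals_Ap hn0 hh).1 hxh).symm⟩

lemma maximals_Ap_eq_image (hfin : Sᶜ.Finite) (hH : Sᶜ.Nonempty) (hn0 : n ≠ 0) :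
    Maximals (· ≤ ·) (Ap S n) = (· + n) '' Maximals (· ≤ ·) Sᶜ := by
  ext x
  constructor
  · exact exists_mem_maximals_compl_of_mem_maximals_Ap hfin hH hn0
  · rintro ⟨h, hh, rfl⟩
    exact add_mem_maximals_Ap hn0 hh

lemma maximals_Cred_eq_maximals_Ap (hfin : Sᶜ.Finite) (hH : Sᶜ.Nonempty) (hn0 : n ≠ 0) :
    Maximals (· ≤ ·) (Cred S n) = Maximals (· ≤ ·) (Ap S n) := by
  refine maximals_eq_of_subset (fun x hx => hx.1) ?_ ?_
  · rw [maximals_Ap_eq_image hfin hH hn0]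
    rintro _ ⟨h, hh, rfl⟩
    exact add_mem_Cred_of_mem_maximals_compl hn0 hh
  · rintro x ⟨-, g, hg, hxg⟩
    obtain ⟨h, hh, hgh⟩ := hfin.exists_le_mem_maximals hg
    exact ⟨h + n, add_mem_maximals_Ap hn0 hh, hxg.trans (add_le_add_left hgh n)⟩

end Apery

theorem statement10_general (d : ℕ) (S : Set (Fin d → ℕ)) (hS : IsGNS S)
    (hH : Sᶜ.Nonempty) (n : Fin d → ℕ) (hn0 : n ≠ 0) :
    Maximals (· ≤ ·) (Ap S n) = Maximals (· ≤ ·) (Cred S n) ∧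
    Maximals (· ≤ ·) (Ap S n) = (· + n) '' Maximals (· ≤ ·) Sᶜ :=
  ⟨(maximals_Cred_eq_maximals_Ap hS.2.2 hH hn0).symm, maximals_Ap_eq_image hS.2.2 hH hn0⟩

/-- `Maximals_≤ Ap(S,n) = Maximals_≤ C(S,n) = {h + n : h ∈ Maximals_≤ H(S)}`. -/
theorem statement10 (d : ℕ) (hd : 0 < d) (S : Set (Fin d → ℕ)) (hS : IsGNS S)
    (hH : Sᶜ.Nonempty) (n : Fin d → ℕ) (hn : n ∈ S) (hn0 : n ≠ 0) :
    Maximals (· ≤ ·) (Ap S n) = Maximals (· ≤ ·) (Cred S n) ∧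
    Maximals (· ≤ ·) (Ap S n) = (· + n) '' Maximals (· ≤ ·) Sᶜ :=
  statement10_general d S hS hH n hn0
end

section
/- Let S ⊆ ℕ_0^d be a GNS, n ∈ S with n ≠ 0, and let ≺ be a monomial order on ℕ_0^d. Then S is symmetric if and only if C(S,n) can be written as C(S,n) = {a_0 ≺ a_1 ≺ ⋯ ≺ a_m} (listed in ≺-increasing order) with a_i + a_{m−i} = a_m for all i ∈ {0,1,…,m}. -/
open scoped BigOperators

/-!
If `PF S = {f}`, every gap `h` satisfies `h + s = f` for some `s ∈ S`, so `C(S,n)` lies below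
`f + n` and `c ↦ f + n - c` is an involution of `C(S,n)`. A monomial order is cancellative, so
this involution reverses `≺`; listing `C(S,n)` increasingly it therefore sends `a_i` to `a_{m-i}`,
and `f + n` is the largest element `a_m`.
Conversely, every pseudo-Frobenius `q` gives `q + n = a_k ∈ C(S,n)`; if `a_{m-k} ≠ 0` then
`a_m - n = q + a_{m-k} ∈ S`, against `a_m ∈ Ap(S,n)`. Hence `q = a_m - n` is unique, and it
exists because `a_0 ∈ C(S,n)` lies below a gap.
-/

open Set

theorem Nat.add_le_of_strictAntiOn_Iic {m : ℕ} {g : ℕ → ℕ} (hmaps : MapsTo g (Iic m) (Iic m))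
    (hg : StrictAntiOn g (Iic m)) : ∀ i ≤ m, g i + i ≤ m := by
  intro i
  induction i with
  | zero => exact fun h => hmaps h
  | succ k ih =>
    intro hk
    have := hg (show k ∈ Iic m by simp only [mem_Iic]; omega) hk k.lt_succ_self
    have := ih (by omega)
    omega

theorem Nat.eq_sub_of_strictAntiOn_Iic {m : ℕ} {g : ℕ → ℕ} (hmaps : MapsTo g (Iic m) (Iic m))
    (hg : StrictAntiOn g (Iic m)) : ∀ i ≤ m, g i = m - i := by
  have hle (i) (hi : i ≤ m) : g i ≤ m := hmaps hi
  -- the reflected map `i ↦ m - g (m - i)` is again strictly antitone on `[0, m]`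
  have hrefl := Nat.add_le_of_strictAntiOn_Iic (g := fun i => m - g (m - i))
    (fun i _ => show m - g (m - i) ≤ m from Nat.sub_le _ _) (fun i _ j hj hij => by
      simp only [mem_Iic] at hj
      have := hg (show m - j ∈ Iic m from Nat.sub_le _ _) (show m - i ∈ Iic m from Nat.sub_le _ _)
        (by omega)
      have := hle (m - j) (Nat.sub_le _ _)
      show m - g (m - j) < m - g (m - i)
      omega)
  intro i hi
  have h₁ := Nat.add_le_of_strictAntiOn_Iic hmaps hg i hi
  have h₂ := hrefl (m - i) (by omega)
  simp only [show m - (m - i) = i by omega] at h₂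
  omega

section Enumeration

variable {α : Type*} {r : α → α → Prop} [IsStrictTotalOrder α r]

theorem exists_enum_of_finite {C : Set α} (hC : C.Finite) (hne : C.Nonempty) :
    ∃ (m : ℕ) (a : ℕ → α), (∀ i j, i < j → j ≤ m → r (a i) (a j)) ∧ C = a '' Icc 0 m := by
  classical
  let := linearOrderOfSTO r
  obtain ⟨x, hx⟩ := hne
  set s := hC.toFinset
  have hs : 0 < s.card := Finset.card_pos.2 ⟨x, hC.mem_toFinset.2 hx⟩
  let e := s.orderEmbOfFin rfl
  refine ⟨s.card - 1, fun i => if h : i < s.card then e ⟨i, h⟩ else x, ?_, ?_⟩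
  · intro i j hij hj
    simp only [dif_pos (show i < s.card by omega), dif_pos (show j < s.card by omega)]
    exact e.strictMono (Fin.mk_lt_mk.2 hij)
  · ext y
    constructor
    · intro hy
      obtain ⟨i, rfl⟩ : y ∈ range e := by
        rw [Finset.range_orderEmbOfFin]
        exact hC.mem_toFinset.2 hy
      exact ⟨i, ⟨i.val.zero_le, by omega⟩, by simp only [dif_pos i.isLt]⟩
    · rintro ⟨i, ⟨-, hi⟩, rfl⟩
      simp only [dif_pos (show i < s.card by omega)]
      exact hC.mem_toFinset.1 (s.orderEmbOfFin_mem rfl _)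

variable {m : ℕ} {a : ℕ → α}

theorem lt_of_rel_enum (ha : ∀ i j, i < j → j ≤ m → r (a i) (a j)) {k l : ℕ} (hk : k ≤ m)
    (h : r (a k) (a l)) : k < l := by
  by_contra! hlk
  rcases hlk.lt_or_eq with hlk | rfl
  · exact asymm h (ha l k hlk hk)
  · exact irrefl _ h

theorem enum_last_eq (ha : ∀ i j, i < j → j ≤ m → r (a i) (a j)) {x : α}
    (hx : x ∈ a '' Icc 0 m) (hmax : ∀ i ≤ m, a i ≠ x → r (a i) x) : a m = x := by
  obtain ⟨k, ⟨-, hk⟩, rfl⟩ := hx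
  by_contra hne
  exact asymm (ha k m (hk.lt_of_ne (by rintro rfl; exact hne rfl)) le_rfl) (hmax m le_rfl hne)

theorem apply_enum_eq_enum_sub (ha : ∀ i j, i < j → j ≤ m → r (a i) (a j)) {φ : α → α}
    (hmaps : ∀ i ≤ m, φ (a i) ∈ a '' Icc 0 m)
    (hφ : ∀ i j, i < j → j ≤ m → r (φ (a j)) (φ (a i))) : ∀ i ≤ m, φ (a i) = a (m - i) := by
  have hindex (i : ℕ) : ∃ k, i ≤ m → k ≤ m ∧ a k = φ (a i) := by
    by_cases hi : i ≤ m
    · obtain ⟨k, ⟨-, hk⟩, hak⟩ := hmaps i hi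
      exact ⟨k, fun _ => ⟨hk, hak⟩⟩
    · exact ⟨0, fun h => absurd h hi⟩
  choose g hg using hindex
  have hg_eq := Nat.eq_sub_of_strictAntiOn_Iic (g := g) (fun i hi => (hg i hi).1)
    (fun i hi j hj hij => lt_of_rel_enum ha (hg j hj).1 <| by
      rw [(hg i hi).2, (hg j hj).2]
      exact hφ i j hij hj)
  intro i hi
  rw [← (hg i hi).2, hg_eq i hi]

end Enumeration

namespace IsMonomialOrder

variable {d : ℕ} {lt : (Fin d → ℕ) → (Fin d → ℕ) → Prop}

theorem isStrictTotalOrder (hlt : IsMonomialOrder d lt) : IsStrictTotalOrder (Fin d → ℕ) lt where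
  irrefl := hlt.1
  trans := hlt.2.1
  trichotomous a b hab hba := by_contra fun hne => (hlt.2.2.1 a b hne).elim hab hba

theorem lt_of_add_lt_add_right (hlt : IsMonomialOrder d lt) {u x y : Fin d → ℕ}
    (h : lt (x + u) (y + u)) : lt x y := by
  obtain ⟨hirr, htrans, htotal, hadd, -⟩ := hlt
  by_contra hxy
  rcases eq_or_ne x y with rfl | hne
  · exact hirr _ h
  · exact hirr _ (htrans _ _ _ h (hadd u _ _ ((htotal x y hne).resolve_left hxy)))

theorem lt_of_le_of_ne (hlt : IsMonomialOrder d lt) {x y : Fin d → ℕ} (hle : x ≤ y)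
    (hne : x ≠ y) : lt x y := by
  have hpos : lt 0 (y - x) := hlt.2.2.2.2 _ fun h => hne (le_antisymm hle (tsub_eq_zero_iff_le.1 h))
  simpa [tsub_add_cancel_of_le hle] using hlt.2.2.2.1 x _ _ hpos

theorem lt_tsub_tsub (hlt : IsMonomialOrder d lt) {F x y : Fin d → ℕ} (hx : x ≤ F) (hy : y ≤ F)
    (h : lt x y) : lt (F - y) (F - x) := by
  refine hlt.lt_of_add_lt_add_right (u := x) ?_
  have h₁ := hlt.2.2.2.1 (F - y) x y h
  rw [add_comm y, tsub_add_cancel_of_le hy, add_comm x] at h₁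
  rwa [tsub_add_cancel_of_le hx]

end IsMonomialOrder

section Apery

variable {d : ℕ} {S : Set (Fin d → ℕ)} {n : Fin d → ℕ}

theorem add_mem_Cred_of_mem_PF (hn : n ∈ S) (hn0 : n ≠ 0) {p : Fin d → ℕ} (hp : p ∈ PF S) :
    p + n ∈ Cred S n :=
  ⟨⟨hp.2 n hn hn0, fun ⟨_, hu, he⟩ => hp.1 (add_right_cancel he ▸ hu)⟩, p, hp.1, le_rfl⟩

theorem PF_subsingleton_of_Cred_eq_enum (hn : n ∈ S) (hn0 : n ≠ 0) {m : ℕ} {a : ℕ → Fin d → ℕ}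
    (hC : Cred S n = a '' Icc 0 m) (hpair : ∀ i ≤ m, a i + a (m - i) = a m) :
    (PF S).Subsingleton := by
  suffices key : ∀ q ∈ PF S, q + n = a m from
    fun p hp q hq => add_right_cancel ((key p hp).trans (key q hq).symm)
  intro q hq
  obtain ⟨k, ⟨-, hk⟩, hak⟩ : q + n ∈ a '' Icc 0 m := hC ▸ add_mem_Cred_of_mem_PF hn hn0 hq
  have hmem (i : ℕ) (hi : i ≤ m) : a i ∈ Cred S n := hC ▸ ⟨i, ⟨i.zero_le, hi⟩, rfl⟩
  by_cases h0 : a (m - k) = 0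
  · rw [← hak, ← hpair k hk, h0, add_zero]
  · refine absurd ⟨q + a (m - k), hq.2 _ (hmem _ (m.sub_le k)).1.1 h0, ?_⟩ (hmem m le_rfl).1.2
    rw [← hpair k hk, hak, add_right_comm]

end Apery

namespace IsGNS

variable {d : ℕ} {S : Set (Fin d → ℕ)} {n : Fin d → ℕ}

theorem Cred_finite (hS : IsGNS S) (n : Fin d → ℕ) : (Cred S n).Finite :=
  (hS.2.2.biUnion fun h _ => finite_Iic (h + n)).subset fun _ ⟨_, _, hh, hle⟩ =>
    mem_biUnion hh hle

theorem exists_mem_PF_leS (hS : IsGNS S) {h : Fin d → ℕ} (hh : h ∉ S) : ∃ p ∈ PF S, leS S h p := by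
  have hfin : {x | x ∉ S ∧ leS S h x}.Finite := hS.2.2.subset fun _ hx => hx.1
  obtain ⟨p, ⟨hpS, hhp⟩, hmax⟩ := hfin.exists_maximal ⟨h, hh, 0, hS.1, add_zero h⟩
  refine ⟨p, ⟨hpS, fun t ht ht0 => ?_⟩, hhp⟩
  by_contra hpt
  obtain ⟨s, hs, rfl⟩ := hhp
  have := hmax ⟨hpt, s + t, hS.2.1 _ _ hs ht, (add_assoc _ _ _).symm⟩ le_self_add
  exact ht0 (nonpos_iff_eq_zero.1 ((add_le_iff_nonpos_right _).1 this))

section Symmetric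

variable {f : Fin d → ℕ}

theorem leS_of_PF_eq_singleton (hS : IsGNS S) (hf : PF S = {f}) {h : Fin d → ℕ} (hh : h ∉ S) :
    leS S h f := by
  obtain ⟨p, hp, hhp⟩ := hS.exists_mem_PF_leS hh
  rw [hf, mem_singleton_iff] at hp
  exact hp ▸ hhp

theorem le_of_mem_Cred (hS : IsGNS S) (hf : PF S = {f}) {c : Fin d → ℕ} (hc : c ∈ Cred S n) :
    c ≤ f + n := by
  obtain ⟨-, h, hh, hch⟩ := hc
  obtain ⟨s, -, rfl⟩ := hS.leS_of_PF_eq_singleton hf hh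
  exact hch.trans (by gcongr; exact le_self_add)

theorem tsub_mem_Cred (hS : IsGNS S) (hf : PF S = {f}) {c : Fin d → ℕ} (hc : c ∈ Cred S n) :
    f + n - c ∈ Cred S n := by
  have hsum : c + (f + n - c) = f + n := add_tsub_cancel_of_le (hS.le_of_mem_Cred hf hc)
  obtain ⟨⟨hcS, hcAp⟩, -⟩ := hc
  refine ⟨⟨?_, ?_⟩, f, (hf ▸ mem_singleton f : f ∈ PF S).1, tsub_le_self⟩
  · by_contra hgap
    obtain ⟨s, hs, hsf⟩ := hS.leS_of_PF_eq_singleton hf hgap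
    refine hcAp ⟨s, hs, add_left_cancel (a := f + n - c) ?_⟩
    rw [← add_assoc, hsf, add_comm (f + n - c), hsum]
  · rintro ⟨u, hu, hun⟩
    have hcu : c + u = f := add_right_cancel (b := n) (by rw [add_assoc, hun, hsum])
    exact (hf ▸ mem_singleton f : f ∈ PF S).1 (hcu ▸ hS.2.1 c u hcS hu)

theorem exists_enum_Cred_of_PF_eq_singleton (hS : IsGNS S) (hn : n ∈ S) (hn0 : n ≠ 0)
    {lt : (Fin d → ℕ) → (Fin d → ℕ) → Prop} (hlt : IsMonomialOrder d lt) (hf : PF S = {f}) :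
    ∃ (m : ℕ) (a : ℕ → Fin d → ℕ), (∀ i j, i < j → j ≤ m → lt (a i) (a j)) ∧
      Cred S n = a '' Icc 0 m ∧ ∀ i ≤ m, a i + a (m - i) = a m := by
  have := hlt.isStrictTotalOrder
  have hF : f + n ∈ Cred S n := add_mem_Cred_of_mem_PF hn hn0 (hf ▸ mem_singleton f)
  obtain ⟨m, a, ha, hC⟩ := exists_enum_of_finite (r := lt) (hS.Cred_finite n) ⟨_, hF⟩
  have hle (i : ℕ) (hi : i ≤ m) : a i ≤ f + n :=
    hS.le_of_mem_Cred hf (hC ▸ ⟨i, ⟨i.zero_le, hi⟩, rfl⟩)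
  have hrev := apply_enum_eq_enum_sub ha (φ := (f + n - ·))
    (fun i hi => hC ▸ hS.tsub_mem_Cred hf (hC ▸ ⟨i, ⟨i.zero_le, hi⟩, rfl⟩))
    (fun i j hij hj => hlt.lt_tsub_tsub (hle i (hij.le.trans hj)) (hle j hj) (ha i j hij hj))
  have hm : a m = f + n :=
    enum_last_eq ha (hC ▸ hF) fun i hi hne => hlt.lt_of_le_of_ne (hle i hi) hne
  refine ⟨m, a, ha, hC, fun i hi => ?_⟩
  rw [← hrev i hi, hm, add_tsub_cancel_of_le (hle i hi)]

end Symmetric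

end IsGNS

theorem statement14_general (d : ℕ) (S : Set (Fin d → ℕ)) (hS : IsGNS S)
    (n : Fin d → ℕ) (hn : n ∈ S) (hn0 : n ≠ 0)
    (lt : (Fin d → ℕ) → (Fin d → ℕ) → Prop) (hlt : IsMonomialOrder d lt) :
    (∃ f : Fin d → ℕ, PF S = {f}) ↔
      ∃ (m : ℕ) (a : ℕ → (Fin d → ℕ)),
        (∀ i j, i < j → j ≤ m → lt (a i) (a j)) ∧
        Cred S n = a '' Set.Icc 0 m ∧
        (∀ i, i ≤ m → a i + a (m - i) = a m) := by
  constructor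
  · rintro ⟨f, hf⟩
    exact hS.exists_enum_Cred_of_PF_eq_singleton hn hn0 hlt hf
  · rintro ⟨m, a, -, hC, hpair⟩
    obtain ⟨-, h, hh, -⟩ : a 0 ∈ Cred S n := hC ▸ ⟨0, ⟨le_rfl, m.zero_le⟩, rfl⟩
    obtain ⟨p, hp, -⟩ := hS.exists_mem_PF_leS hh
    exact exists_eq_singleton_iff_nonempty_subsingleton.2
      ⟨⟨p, hp⟩, PF_subsingleton_of_Cred_eq_enum hn hn0 hC hpair⟩

/-- `S` is symmetric iff `C(S,n) = {a_0 ≺ ⋯ ≺ a_m}` with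
`a_i + a_{m-i} = a_m` for all `i`. -/
theorem statement14 (d : ℕ) (hd : 0 < d) (S : Set (Fin d → ℕ)) (hS : IsGNS S)
    (n : Fin d → ℕ) (hn : n ∈ S) (hn0 : n ≠ 0)
    (lt : (Fin d → ℕ) → (Fin d → ℕ) → Prop) (hlt : IsMonomialOrder d lt) :
    (∃ f : Fin d → ℕ, PF S = {f}) ↔
      ∃ (m : ℕ) (a : ℕ → (Fin d → ℕ)),
        (∀ i j, i < j → j ≤ m → lt (a i) (a j)) ∧
        Cred S n = a '' Set.Icc 0 m ∧
        (∀ i, i ≤ m → a i + a (m - i) = a m) :=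
  statement14_general d S hS n hn hn0 lt hlt
end

section
/- Let S ⊆ ℕ_0^d be an almost symmetric GNS with Frobenius element f, and let x ∈ SG(S) ∖ {f} (so that S ∪ {x} is again a GNS). Then S ∪ {x} is almost symmetric if and only if PF(S ∪ {x}) = PF(S) ∖ {x, f − x}. -/
open scoped BigOperators

/-!
Let `f` be the largest gap of a semigroup `U` and `L(U) = symmetricGaps U f` the set of gaps `h`
for which `f - h` is a gap too. The box `[0, f]`, of size `|f + 1|_×`, contains every gap, and
`h ↦ f - h` maps the gaps outside `L(U)` bijectively onto the elements of `U` in the box (two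
elements of `U` cannot sum to the gap `f`). Hence `2 g(U) = |f + 1|_× + |L(U)|`. Since
`PF(U) ∖ {f} ⊆ L(U)` and `|h + 1|_× ≤ |f + 1|_×` for every gap `h`, `U` is almost symmetric
exactly when `PF(U) ∖ {f} = L(U)`. Adjoining a special gap `x` keeps `f` as the largest gap and removes exactly
`x` and `f - x` from `L`, so for `S` almost symmetric `L(S ∪ {x}) = (PF(S) ∖ {f}) ∖ {x, f - x}`.
-/

namespace GNS

variable {d : ℕ}

def symmetricGaps (U : Set (Fin d → ℕ)) (f : Fin d → ℕ) : Set (Fin d → ℕ) :=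
  {h | h ∉ U ∧ f - h ∉ U}

lemma isGreatest_compl_of_isFrobenius {S : Set (Fin d → ℕ)} {f : Fin d → ℕ}
    (hfin : Sᶜ.Finite) (hf : IsFrobenius S f) : IsGreatest Sᶜ f := by
  have hmax : ∀ y, Maximal (· ∈ Sᶜ) y → y = f := fun y hy => by
    have hy' : y ∈ Maximals (· ≤ ·) Sᶜ := ⟨hy.1, fun z hz hyz => le_antisymm hyz (hy.2 hz hyz)⟩
    rwa [hf] at hy'
  have hfS : f ∈ Sᶜ := (show f ∈ Maximals (· ≤ ·) Sᶜ from hf ▸ rfl).1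
  refine ⟨hfS, fun h hh => ?_⟩
  obtain ⟨y, hhy, hy⟩ := hfin.exists_le_maximal hh
  exact hmax y hy ▸ hhy

lemma ncard_Iic (f : Fin d → ℕ) : (Set.Iic f).ncard = ∏ i, (f i + 1) := by
  rw [← Finset.coe_Iic, Set.ncard_coe_finset, Pi.card_Iic]
  simp

section Counting

variable {U : Set (Fin d → ℕ)} {f : Fin d → ℕ}

lemma image_sub_compl_inter_preimage (hadd : ∀ a b, a ∈ U → b ∈ U → a + b ∈ U)
    (hf : IsGreatest Uᶜ f) :
    (f - ·) '' (Uᶜ ∩ (f - ·) ⁻¹' U) = Set.Iic f ∩ U := by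
  ext y
  constructor
  · rintro ⟨h, ⟨-, hfh⟩, rfl⟩
    exact ⟨Set.mem_Iic.2 tsub_le_self, hfh⟩
  · rintro ⟨hyf : y ≤ f, hyU⟩
    refine ⟨f - y, ⟨fun hc => hf.1 ?_, ?_⟩, tsub_tsub_cancel_of_le hyf⟩
    · simpa [add_tsub_cancel_of_le hyf] using hadd _ _ hyU hc
    · simpa [tsub_tsub_cancel_of_le hyf] using hyU

lemma two_mul_ncard_compl (hadd : ∀ a b, a ∈ U → b ∈ U → a + b ∈ U)
    (hf : IsGreatest Uᶜ f) :
    2 * Uᶜ.ncard = ∏ i, (f i + 1) + (symmetricGaps U f).ncard := by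
  have hfin : Uᶜ.Finite := (Set.finite_Iic f).subset hf.2
  have hsub : Uᶜ ⊆ Set.Iic f := fun _ hh => hf.2 hh
  have hinj : Set.InjOn (f - ·) Uᶜ := fun a ha b hb hab => by
    rw [← tsub_tsub_cancel_of_le (hf.2 ha), ← tsub_tsub_cancel_of_le (hf.2 hb)]
    exact congrArg (f - ·) hab
  have hreflect : (Uᶜ ∩ (f - ·) ⁻¹' U).ncard = (Set.Iic f ∩ U).ncard := by
    rw [← image_sub_compl_inter_preimage hadd hf, (hinj.mono Set.inter_subset_left).ncard_image]
  have hbox : (Set.Iic f ∩ U).ncard + Uᶜ.ncard = ∏ i, (f i + 1) := by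
    rw [← ncard_Iic, ← Set.ncard_inter_add_ncard_sdiff_eq_ncard _ U (Set.finite_Iic f),
      Set.sdiff_eq, Set.inter_eq_right.mpr hsub]
  have hgaps := Set.ncard_inter_add_ncard_sdiff_eq_ncard Uᶜ ((f - ·) ⁻¹' U) hfin
  change _ + (symmetricGaps U f).ncard = _ at hgaps
  omega

lemma mem_PF_of_isGreatest (hf : IsGreatest Uᶜ f) : f ∈ PF U := by
  refine ⟨hf.1, fun s _ hs0 => by_contra fun hc => hs0 ?_⟩
  simpa using hf.2 hc

lemma PF_diff_subset_symmetricGaps (hf : IsGreatest Uᶜ f) :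
    PF U \ {f} ⊆ symmetricGaps U f := by
  rintro h ⟨⟨hhU, hPF⟩, hhf⟩
  have hhle : h ≤ f := hf.2 hhU
  refine ⟨hhU, fun hc => hf.1 ?_⟩
  have hne : f - h ≠ 0 := fun h0 => hhf (le_antisymm hhle (tsub_eq_zero_iff_le.mp h0))
  simpa [add_tsub_cancel_of_le hhle] using hPF _ hc hne

theorem almostSymmetric_iff (hadd : ∀ a b, a ∈ U → b ∈ U → a + b ∈ U)
    (hf : IsGreatest Uᶜ f) :
    AlmostSymmetric U ↔ PF U \ {f} = symmetricGaps U f := by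
  have hfin : Uᶜ.Finite := (Set.finite_Iic f).subset hf.2
  have hcount := two_mul_ncard_compl hadd hf
  have hsub := PF_diff_subset_symmetricGaps hf
  have hLfin : (symmetricGaps U f).Finite := hfin.subset fun _ hh => hh.1
  have htyp : (PF U \ {f}).ncard + 1 = typ U :=
    Set.ncard_sdiff_singleton_add_one (mem_PF_of_isGreatest hf) (hfin.subset fun _ hh => hh.1)
  unfold AlmostSymmetric genus
  constructor
  · rintro ⟨h, hhU, heq⟩
    have hprod : ∏ i, (h i + 1) ≤ ∏ i, (f i + 1) :=
      Finset.prod_le_prod' fun i _ => Nat.succ_le_succ (hf.2 hhU i)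
    exact Set.eq_of_subset_of_ncard_le hsub (by omega) hLfin
  · intro heq
    exact ⟨f, hf.1, by rw [heq] at htyp; omega⟩

end Counting

section SpecialGap

variable {S : Set (Fin d → ℕ)} {x : Fin d → ℕ}

lemma add_mem_union_singleton (hadd : ∀ a b, a ∈ S → b ∈ S → a + b ∈ S) (hx : x ∈ SG S)
    {a b : Fin d → ℕ} (ha : a ∈ S ∪ {x}) (hb : b ∈ S ∪ {x}) : a + b ∈ S ∪ {x} := by
  have hxs : ∀ s ∈ S, x + s ∈ S ∪ {x} := fun s hs => by
    by_cases hs0 : s = 0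
    · simp [hs0]
    · exact Or.inl (hx.1.2 s hs hs0)
  rcases ha with ha | (ha : a = x) <;> rcases hb with hb | (hb : b = x)
  · exact Or.inl (hadd a b ha hb)
  · rw [hb, add_comm]; exact hxs a ha
  · rw [ha]; exact hxs b hb
  · rw [ha, hb]; exact Or.inl hx.2

lemma symmetricGaps_union_singleton {f : Fin d → ℕ} (hf : IsGreatest Sᶜ f) (hxS : x ∉ S) :
    symmetricGaps (S ∪ {x}) f = symmetricGaps S f \ {x, f - x} := by
  ext h
  simp only [symmetricGaps, Set.mem_ofPred_eq, Set.mem_sdiff, Set.mem_insert_iff,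
    Set.mem_union, Set.mem_singleton_iff, not_or]
  constructor
  · rintro ⟨⟨hhS, hhx⟩, hfhS, hfhx⟩
    refine ⟨⟨hhS, hfhS⟩, hhx, ?_⟩
    rintro rfl
    exact hfhx (tsub_tsub_cancel_of_le (hf.2 hxS))
  · rintro ⟨⟨hhS, hfhS⟩, hhx, hhfx⟩
    refine ⟨⟨hhS, hhx⟩, hfhS, fun hc => hhfx ?_⟩
    rw [← hc, tsub_tsub_cancel_of_le (hf.2 hhS)]

end SpecialGap

lemma diff_singleton_eq_diff_singleton_iff {α : Type*} {s t : Set α} {a : α}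
    (hs : a ∈ s) (ht : a ∈ t) : s \ {a} = t \ {a} ↔ s = t := by
  refine ⟨fun h => ?_, fun h => h ▸ rfl⟩
  rw [← Set.insert_eq_of_mem hs, ← Set.insert_eq_of_mem ht, ← Set.insert_sdiff_singleton,
    h, Set.insert_sdiff_singleton]

end GNS

open GNS in
theorem statement15_general (d : ℕ) (S : Set (Fin d → ℕ)) (hS : IsGNS S)
    (f : Fin d → ℕ) (hf : IsFrobenius S f) (hAS : AlmostSymmetric S)
    (x : Fin d → ℕ) (hx : x ∈ SG S) (hxf : x ≠ f) :
    AlmostSymmetric (S ∪ {x}) ↔ PF (S ∪ {x}) = PF S \ {x, f - x} := by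
  obtain ⟨h0S, haddS, hfinS⟩ := hS
  have hfS : IsGreatest Sᶜ f := isGreatest_compl_of_isFrobenius hfinS hf
  have hxS : x ∉ S := hx.1.1
  have hfT : IsGreatest (S ∪ {x})ᶜ f :=
    ⟨fun h => h.elim hfS.1 fun h => hxf h.symm, fun _ hh => hfS.2 fun hs => hh (Or.inl hs)⟩
  have hx0 : x ≠ 0 := fun h => hxS (h ▸ h0S)
  have hff : f ∉ ({x, f - x} : Set (Fin d → ℕ)) := by
    rintro (h | h)
    · exact hxf h.symm
    · exact hx0 (by simpa [tsub_add_cancel_of_le (hfS.2 hxS)] using congrArg (· + x) h.symm)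
  rw [almostSymmetric_iff (fun _ _ => add_mem_union_singleton haddS hx) hfT,
    symmetricGaps_union_singleton hfS hxS, ← (almostSymmetric_iff haddS hfS).mp hAS,
    Set.sdiff_sdiff_comm]
  exact diff_singleton_eq_diff_singleton_iff (mem_PF_of_isGreatest hfT)
    ⟨mem_PF_of_isGreatest hfS, hff⟩

/-- for an almost symmetric GNS `(S,f)` and `x ∈ SG(S) ∖ {f}`,
`S ∪ {x}` is almost symmetric iff `PF(S ∪ {x}) = PF(S) ∖ {x, f - x}`. -/
theorem statement15 (d : ℕ) (hd : 0 < d) (S : Set (Fin d → ℕ)) (hS : IsGNS S)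
    (f : Fin d → ℕ) (hf : IsFrobenius S f) (hAS : AlmostSymmetric S)
    (x : Fin d → ℕ) (hx : x ∈ SG S) (hxf : x ≠ f) :
    AlmostSymmetric (S ∪ {x}) ↔ PF (S ∪ {x}) = PF S \ {x, f - x} :=
  statement15_general d S hS f hf hAS x hx hxf
end
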